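/- Let H be a complex Hilbert space, let A be a bounded self-adjoint operator on H, and let φ : ℝ → ℂ be a Schwartz function. Define the Fourier transform φ̂(t) = ∫_ℝ e^{−itλ} φ(λ) dλ. Then the operator φ(A), defined by the continuous functional calculus applied to the restriction of φ to the spectrum of A, is given by the norm-convergent Bochner integral φ(A) = (1/2π) ∫_ℝ φ̂(t) · exp(itA) dt, where exp(itA) is the operator exponential of itA and φ̂(t) · exp(itA) denotes scalar multiplication of the operator exp(itA) by the complex number φ̂(t). -/

import Mathlib

open MeasureTheory Complex
open scoped FourierTransform Real

/-!
Since `A` is self-adjoint its spectrum is real, and on it `exp (itA)` is the functional calculus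
of `z ↦ e^{itz}`, a function of modulus one. Hence the integrand is dominated on the spectrum by
`|φ̂ t|`, so the Bochner integral commutes with the functional calculus, and the resulting
function `z ↦ (1/2π) ∫ φ̂ t e^{itz} dt` is `φ` on the real line by Fourier inversion.
-/

namespace Real

theorem integral_exp_neg_I_mul_mul_eq_fourier (f : ℝ → ℂ) (t : ℝ) :
    ∫ x : ℝ, Complex.exp (-(I * t * x)) * f x = 𝓕 f (t / (2 * π)) := by
  rw [fourier_real_eq_integral_exp_smul]
  congr 1 with x
  rw [smul_eq_mul]
  congr 2
  push_cast
  field_simp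

theorem integral_fourier_div_two_pi_mul_exp {f : ℝ → ℂ} (hc : Continuous f) (hf : Integrable f)
    (hFf : Integrable (𝓕 f)) (x : ℝ) :
    ∫ t : ℝ, 𝓕 f (t / (2 * π)) * Complex.exp (I * t * x) = 2 * π * f x := by
  have h2π : (0 : ℝ) < 2 * π := by positivity
  let g : ℝ → ℂ := fun u => Complex.exp (↑(2 * π * u * x) * I) • 𝓕 f u
  calc ∫ t : ℝ, 𝓕 f (t / (2 * π)) * Complex.exp (I * t * x)
      = ∫ t : ℝ, g (t / (2 * π)) := by
        congr 1 with t
        simp only [g, smul_eq_mul]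
        rw [mul_comm]
        congr 2
        push_cast
        field_simp
    _ = 2 * π * 𝓕⁻ (𝓕 f) x := by
        rw [Measure.integral_comp_div g, abs_of_pos h2π, fourierInv_eq']
        simp only [g, RCLike.inner_apply, conj_trivial, Complex.real_smul]
        push_cast
        congr 2 with u
        ring_nf
    _ = 2 * π * f x := by rw [hc.fourierInv_fourier_eq hf hFf]

end Real

section CStarAlgebra

variable {A : Type*} [CStarAlgebra A]

theorem NormedSpace.exp_smul_eq_cfc (c : ℂ) {a : A} (ha : IsStarNormal a) :
    NormedSpace.exp (c • a) = cfc (fun z => Complex.exp (c * z)) a := by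
  rw [cfc_comp_const_mul c Complex.exp a, CFC.complex_exp_eq_normedSpace_exp]

theorem IsSelfAdjoint.integral_smul_exp_eq_cfc {a : A} (ha : IsSelfAdjoint a) {g : ℝ → ℂ}
    (hc : Continuous g) (hg : Integrable g) :
    ∫ t : ℝ, g t • NormedSpace.exp ((I * t) • a) =
      cfc (fun z => ∫ t : ℝ, g t * Complex.exp (I * t * z)) a := by
  have hbound : ∀ t : ℝ, ∀ z ∈ spectrum ℂ a, ‖g t * Complex.exp (I * t * z)‖ ≤ ‖g t‖ := by
    intro t z hz
    rw [norm_mul, norm_exp]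
    simp [ha.im_eq_zero_of_mem_spectrum hz]
  rw [cfc_integral _ (fun t => ‖g t‖) a (by fun_prop) (.of_forall hbound)
    hg.norm.hasFiniteIntegral]
  congr 1 with t
  rw [NormedSpace.exp_smul_eq_cfc _ ha.isStarNormal,
    cfc_const_mul (g t) (fun z => Complex.exp (I * t * z)) a]

end CStarAlgebra

/-- For a bounded self-adjoint operator `A` on a complex Hilbert space and a Schwartz
function `φ`, with `φ̂(t) = ∫ e^{-itλ} φ(λ) dλ`, the functional calculus satisfies
`φ(A) = (1/2π) ∫ φ̂(t) exp(itA) dt`. -/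
theorem stmt4 {H : Type*} [NormedAddCommGroup H] [InnerProductSpace ℂ H] [CompleteSpace H]
    (A : H →L[ℂ] H) (hA : IsSelfAdjoint A)
    (φ : SchwartzMap ℝ ℂ)
    (φhat : ℝ → ℂ)
    (hφhat : ∀ t : ℝ, φhat t = ∫ lam : ℝ, Complex.exp (-(Complex.I * t * lam)) * φ lam) :
    cfc (fun z : ℂ => φ z.re) A =
      ((1 / (2 * Real.pi) : ℝ) : ℂ) •
        ∫ t : ℝ, φhat t • NormedSpace.exp ((Complex.I * t) • A) := by
  have hφhat_eq : φhat = fun t => 𝓕 φ (t / (2 * π)) := by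
    ext t
    rw [hφhat, Real.integral_exp_neg_I_mul_mul_eq_fourier, SchwartzMap.fourier_coe]
  rw [← integral_smul, hφhat_eq]
  simp_rw [smul_smul]
  have hφhat_int : Integrable fun t : ℝ => 𝓕 φ (t / (2 * π)) :=
    (𝓕 φ).integrable.comp_div Real.two_pi_pos.ne'
  rw [hA.integral_smul_exp_eq_cfc (by fun_prop) (hφhat_int.const_mul _)]
  refine cfc_congr fun z hz => ?_
  obtain ⟨x, rfl⟩ : ∃ x : ℝ, z = x := ⟨z.re, hA.mem_spectrum_eq_re hz⟩
  simp only [mul_assoc ((1 / (2 * π) : ℝ) : ℂ), integral_const_mul, Complex.ofReal_re]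
  rw [SchwartzMap.fourier_coe,
    Real.integral_fourier_div_two_pi_mul_exp φ.continuous φ.integrable (𝓕 φ).integrable]
  push_cast
  field_simp
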